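/- The lattice U(2)+E₆(2) contains no 2-roots and no 6-roots, and it is achiral. -/

import Mathlib

/-!  Basic framework for integral lattices given by Gram matrices. -/

structure IntLattice where
  n : ℕ
  B : Matrix (Fin n) (Fin n) ℤ

namespace IntLattice

/-- The bilinear form of the lattice on `ℤ^n`. -/
def bform (L : IntLattice) (x y : Fin L.n → ℤ) : ℤ :=
  dotProduct x (L.B.mulVec y)

/-- The rational extension of the bilinear form, on `ℚ^n = L ⊗ ℚ`. -/
def bQ (L : IntLattice) (x y : Fin L.n → ℚ) : ℚ :=
  dotProduct x ((L.B.map (Int.cast : ℤ → ℚ)).mulVec y)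

/-- The real extension of the bilinear form, on `ℝ^n = L ⊗ ℝ`. -/
def bR (L : IntLattice) (x y : Fin L.n → ℝ) : ℝ :=
  dotProduct x ((L.B.map (Int.cast : ℤ → ℝ)).mulVec y)

/-- The lattice is even: `b(x,x)` is even for all `x`. -/
def IsEvenLat (L : IntLattice) : Prop := ∀ x, Even (L.bform x x)

/-- Nondegeneracy of the bilinear form. -/
def Nondeg (L : IntLattice) : Prop := L.B.det ≠ 0

/-- Symmetry of the Gram matrix. -/
def IsSymmLat (L : IntLattice) : Prop := L.B.IsSymm

/-- `ℤ ⊂ ℚ` as a `ℤ`-submodule of `ℚ`. -/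
def intQ : Submodule ℤ ℚ := Submodule.span ℤ ({1} : Set ℚ)

/-- The lattice `L = ℤ^n` sitting inside `ℚ^n = L ⊗ ℚ`. -/
def latt (L : IntLattice) : Submodule ℤ (Fin L.n → ℚ) :=
  Submodule.pi Set.univ fun _ => intQ

lemma bQ_add_left (L : IntLattice) (a b y : Fin L.n → ℚ) :
    L.bQ (a + b) y = L.bQ a y + L.bQ b y := add_dotProduct _ _ _

lemma bQ_smul_left (L : IntLattice) (c : ℤ) (a y : Fin L.n → ℚ) :
    L.bQ (c • a) y = c • L.bQ a y := smul_dotProduct _ _ _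

lemma bQ_zero_left (L : IntLattice) (y : Fin L.n → ℚ) :
    L.bQ 0 y = 0 := zero_dotProduct _

/-- The dual lattice `L♯ = {y ∈ L ⊗ ℚ : b(y,x) ∈ ℤ for all x ∈ L}`, inside `ℚ^n`. -/
def dual (L : IntLattice) : Submodule ℤ (Fin L.n → ℚ) where
  carrier := {y | ∀ x : Fin L.n → ℤ, L.bQ y (fun i => (x i : ℚ)) ∈ intQ}
  add_mem' := by
    intro a b ha hb
    simp only [Set.mem_setOf_eq] at *
    intro x
    rw [bQ_add_left]
    exact add_mem (ha x) (hb x)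
  zero_mem' := by
    simp only [Set.mem_setOf_eq]
    intro x
    rw [bQ_zero_left]
    exact zero_mem _
  smul_mem' := by
    intro c a ha
    simp only [Set.mem_setOf_eq] at *
    intro x
    rw [bQ_smul_left]
    exact Submodule.smul_mem _ _ (ha x)

/-- The discriminant group `discr L = L♯ / L`. -/
abbrev discrG (L : IntLattice) :=
  L.dual ⧸ Submodule.comap L.dual.subtype L.latt

/-- The discriminant quadratic form takes only integer values (mod 2ℤ) on the 2-torsion
subgroup of the discriminant group; phrased via representatives. -/
def EvenTwoTorsion (L : IntLattice) : Prop :=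
  ∀ y ∈ L.dual, (2 : ℤ) • y ∈ L.latt → ∃ m : ℤ, L.bQ y y = (m : ℚ)

/-- Two lattices are isometric: a `ℤ`-linear isomorphism preserving the forms. -/
def Isometric (L M : IntLattice) : Prop :=
  ∃ e : (Fin L.n → ℤ) ≃ₗ[ℤ] (Fin M.n → ℤ), ∀ x y, M.bform (e x) (e y) = L.bform x y

/-- `σ₋(L) = k`: some (hence any) real diagonalization of the form has exactly `k`
negative diagonal entries. -/
def negIndexEq (L : IntLattice) (k : ℕ) : Prop :=
  ∃ P : Matrix (Fin L.n) (Fin L.n) ℝ, IsUnit P.det ∧ ∃ d : Fin L.n → ℝ,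
    P.transpose * (L.B.map (Int.cast : ℤ → ℝ)) * P = Matrix.diagonal d ∧
    Nat.card {i : Fin L.n // d i < 0} = k

/-- A 2-root: a vector of square 2. -/
def IsTwoRoot (L : IntLattice) (v : Fin L.n → ℤ) : Prop := L.bform v v = 2

/-- A 6-root: a vector of square 6 with `3 ∣ b(v,x)` for all `x ∈ L`. -/
def IsSixRoot (L : IntLattice) (v : Fin L.n → ℤ) : Prop :=
  L.bform v v = 6 ∧ ∀ x, (3 : ℤ) ∣ L.bform v x

/-- A root: a 2-root or a 6-root. -/
def IsRoot (L : IntLattice) (v : Fin L.n → ℤ) : Prop := L.IsTwoRoot v ∨ L.IsSixRoot v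

/-- The set `{x ∈ L ⊗ ℝ : b(x,x) < 0, b(x,v) ≠ 0 for every root v}`. -/
def negCone (L : IntLattice) : Set (Fin L.n → ℝ) :=
  {x | L.bR x x < 0 ∧ ∀ v : Fin L.n → ℤ, L.IsRoot v → L.bR x (fun i => (v i : ℝ)) ≠ 0}

/-- The matrix of an endomorphism of `ℤ^n` in the standard basis. -/
def matOf (L : IntLattice) (g : (Fin L.n → ℤ) →ₗ[ℤ] (Fin L.n → ℤ)) :
    Matrix (Fin L.n) (Fin L.n) ℤ :=
  Matrix.of fun i j => g (Pi.single j 1) i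

/-- The real extension `g ⊗ ℝ` of an endomorphism `g` of the lattice. -/
def mapR (L : IntLattice) (g : (Fin L.n → ℤ) →ₗ[ℤ] (Fin L.n → ℤ)) :
    (Fin L.n → ℝ) → (Fin L.n → ℝ) :=
  fun x => ((L.matOf g).map (Int.cast : ℤ → ℝ)).mulVec x

/-- The rational extension `g ⊗ ℚ` of an endomorphism `g` of the lattice. -/
def mapQ (L : IntLattice) (g : (Fin L.n → ℤ) →ₗ[ℤ] (Fin L.n → ℤ)) :
    (Fin L.n → ℚ) → (Fin L.n → ℚ) :=
  fun x => ((L.matOf g).map (Int.cast : ℤ → ℚ)).mulVec x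

/-- `g` induces multiplication by `-1` on the 3-torsion subgroup of the discriminant
group; phrased via representatives. -/
def InducesNeg3 (L : IntLattice) (g : (Fin L.n → ℤ) →ₗ[ℤ] (Fin L.n → ℤ)) : Prop :=
  ∀ y ∈ L.dual, (3 : ℤ) • y ∈ L.latt → L.mapQ g y + y ∈ L.latt

/-- `g` induces the identity on the 3-torsion subgroup of the discriminant group;
phrased via representatives. -/
def InducesId3 (L : IntLattice) (g : (Fin L.n → ℤ) →ₗ[ℤ] (Fin L.n → ℤ)) : Prop :=
  ∀ y ∈ L.dual, (3 : ℤ) • y ∈ L.latt → L.mapQ g y - y ∈ L.latt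

/-- `g` is an isometry of `L`. -/
def IsIsometry (L : IntLattice) (g : (Fin L.n → ℤ) ≃ₗ[ℤ] (Fin L.n → ℤ)) : Prop :=
  ∀ x y, L.bform (g x) (g y) = L.bform x y

/-- Achirality: there are an isometry `g` of `L` and a connected component `C` of
`negCone L` such that `(g ⊗ ℝ)(C) = C` and `g` induces `-1` on the 3-torsion of the
discriminant group. -/
def Achiral (L : IntLattice) : Prop :=
  ∃ g : (Fin L.n → ℤ) ≃ₗ[ℤ] (Fin L.n → ℤ), L.IsIsometry g ∧
    (∃ x ∈ L.negCone,
      L.mapR g.toLinearMap '' connectedComponentIn L.negCone x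
        = connectedComponentIn L.negCone x) ∧
    L.InducesNeg3 g.toLinearMap

def Chiral (L : IntLattice) : Prop := ¬ L.Achiral

lemma bform_add_left (L : IntLattice) (a b y : Fin L.n → ℤ) :
    L.bform (a + b) y = L.bform a y + L.bform b y := add_dotProduct _ _ _

lemma bform_smul_left (L : IntLattice) (c : ℤ) (a y : Fin L.n → ℤ) :
    L.bform (c • a) y = c • L.bform a y := smul_dotProduct _ _ _

lemma bform_zero_left (L : IntLattice) (y : Fin L.n → ℤ) :
    L.bform 0 y = 0 := zero_dotProduct _

/-- The orthogonal complement of a sublattice. -/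
def ortho (L : IntLattice) (S : Submodule ℤ (Fin L.n → ℤ)) : Submodule ℤ (Fin L.n → ℤ) where
  carrier := {x | ∀ y ∈ S, L.bform x y = 0}
  add_mem' := by
    intro a b ha hb
    simp only [Set.mem_setOf_eq] at *
    intro y hy
    rw [bform_add_left, ha y hy, hb y hy]
    ring
  zero_mem' := by
    simp only [Set.mem_setOf_eq]
    intro y _
    exact bform_zero_left L y
  smul_mem' := by
    intro c a ha
    simp only [Set.mem_setOf_eq] at *
    intro y hy
    rw [bform_smul_left, ha y hy]
    simp
  
/-- A primitive sublattice: the quotient is torsion free. -/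
def IsPrimitive (L : IntLattice) (S : Submodule ℤ (Fin L.n → ℤ)) : Prop :=
  ∀ (x : Fin L.n → ℤ) (m : ℤ), m ≠ 0 → m • x ∈ S → x ∈ S

/-- A sublattice `S ⊂ L` (with the restricted form) is isometric to the lattice `M`. -/
def SubIsometric (L : IntLattice) (S : Submodule ℤ (Fin L.n → ℤ)) (M : IntLattice) : Prop :=
  ∃ e : S ≃ₗ[ℤ] (Fin M.n → ℤ), ∀ x y : S, M.bform (e x) (e y) = L.bform x y

/-! ### Concrete lattices -/

/-- The hyperbolic plane `U`. -/
def latU : IntLattice := ⟨2, !![0,1;1,0]⟩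

/-- The root lattice `A₁`. -/
def latA1 : IntLattice := ⟨1, !![2]⟩

/-- The root lattice `A₂`. -/
def latA2 : IntLattice := ⟨2, !![2,-1;-1,2]⟩

/-- The root lattice `D₄` (first vector is the central node). -/
def latD4 : IntLattice := ⟨4, !![2,-1,-1,-1;-1,2,0,0;-1,0,2,0;-1,0,0,2]⟩

/-- The root lattice `E₆`: chain `e₁,…,e₅`, with `e₆` attached to `e₃`. -/
def latE6 : IntLattice :=
  ⟨6, !![ 2,-1, 0, 0, 0, 0;
         -1, 2,-1, 0, 0, 0;
          0,-1, 2,-1, 0,-1;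
          0, 0,-1, 2,-1, 0;
          0, 0, 0,-1, 2, 0;
          0, 0,-1, 0, 0, 2]⟩

/-- The root lattice `E₈`: chain `e₁,…,e₇`, with `e₈` attached to `e₅`. -/
def latE8 : IntLattice :=
  ⟨8, !![ 2,-1, 0, 0, 0, 0, 0, 0;
         -1, 2,-1, 0, 0, 0, 0, 0;
          0,-1, 2,-1, 0, 0, 0, 0;
          0, 0,-1, 2,-1, 0, 0, 0;
          0, 0, 0,-1, 2,-1, 0,-1;
          0, 0, 0, 0,-1, 2,-1, 0;
          0, 0, 0, 0, 0,-1, 2, 0;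
          0, 0, 0, 0,-1, 0, 0, 2]⟩

/-- The rank one lattice `⟨k⟩`; in particular `−A₁ = ⟨-2⟩`. -/
def latGen (k : ℤ) : IntLattice := ⟨1, !![k]⟩

/-- `L(c)`: the lattice `L` with its form multiplied by `c`. -/
def twist (c : ℤ) (L : IntLattice) : IntLattice := ⟨L.n, c • L.B⟩

/-- Orthogonal direct sum of two lattices. -/
def dsum (L M : IntLattice) : IntLattice :=
  ⟨L.n + M.n,
    Matrix.submatrix (Matrix.fromBlocks L.B 0 0 M.B) finSumFinEquiv.symm finSumFinEquiv.symm⟩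

instance : Add IntLattice := ⟨dsum⟩

/-- Orthogonal direct sum of `t` copies of a lattice. -/
def rep : ℕ → IntLattice → IntLattice
  | 0, _ => ⟨0, 0⟩
  | (k+1), L => rep k L + L

end IntLattice

/-!
Every vector of `U(2) + E₆(2)` has norm twice an even number, hence divisible by `4`, so there
are no vectors of norm `2` or `6` at all. Without roots, `negCone` is the whole negative cone, so
the isometry `g = 1 ⊕ -1` (identity on `U(2)`, `-1` on `E₆(2)`) preserves it and fixes the
negative vector `(1, -1)` of `U(2)`; being an involution, it maps the component of that vector
onto itself. Since `discr U(2)` is `2`-elementary, for `y ∈ L♯` the vector `g y + y` is twice the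
`U(2)`-part of `y` and so lies in `L`: `g` acts as `-1` on the `3`-torsion.
-/

theorem Function.Involutive.image_connectedComponentIn_eq {X : Type*} [TopologicalSpace X]
    {f : X → X} {S : Set X} {x : X} (hf : Function.Involutive f) (hc : Continuous f)
    (hS : Set.MapsTo f S S) (hx : x ∈ S) (hfx : f x = x) :
    f '' connectedComponentIn S x = connectedComponentIn S x := by
  have himage : f '' S = S := (Set.mapsTo_iff_image_subset.1 hS).antisymm
    fun s hs => ⟨f s, hS hs, hf s⟩
  have hsub : f '' connectedComponentIn S x ⊆ connectedComponentIn S x := by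
    simpa only [himage, hfx] using hc.continuousOn.image_connectedComponentIn_subset hx
  exact hsub.antisymm fun y hy => ⟨f y, hsub ⟨y, hy, rfl⟩, hf y⟩

namespace IntLattice

open Matrix

theorem dotProduct_fromBlocks_submatrix_mulVec {R : Type*} [CommRing R] {m n : ℕ}
    (A : Matrix (Fin m) (Fin m) R) (C : Matrix (Fin n) (Fin n) R) (x y : Fin (m + n) → R) :
    x ⬝ᵥ (fromBlocks A 0 0 C).submatrix finSumFinEquiv.symm finSumFinEquiv.symm *ᵥ y =
      (x ∘ Fin.castAdd n) ⬝ᵥ A *ᵥ (y ∘ Fin.castAdd n) +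
        (x ∘ Fin.natAdd m) ⬝ᵥ C *ᵥ (y ∘ Fin.natAdd m) := by
  have split : ∀ z : Fin (m + n) → R,
      z ∘ finSumFinEquiv = Sum.elim (z ∘ Fin.castAdd n) (z ∘ Fin.natAdd m) := by
    intro z; ext (i | i) <;> rfl
  rw [submatrix_mulVec_equiv, Equiv.symm_symm, dotProduct_comp_equiv_symm, fromBlocks_mulVec,
    split, split]
  simp [sumElim_dotProduct_sumElim]

section Forms

variable (L M : IntLattice)

theorem dotProduct_add_B_map_mulVec {R : Type*} [CommRing R] (x y : Fin (L.n + M.n) → R) :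
    x ⬝ᵥ (L + M).B.map (Int.cast : ℤ → R) *ᵥ y =
      (x ∘ Fin.castAdd M.n) ⬝ᵥ L.B.map Int.cast *ᵥ (y ∘ Fin.castAdd M.n) +
        (x ∘ Fin.natAdd L.n) ⬝ᵥ M.B.map Int.cast *ᵥ (y ∘ Fin.natAdd L.n) := by
  change x ⬝ᵥ
    ((fromBlocks L.B 0 0 M.B).submatrix finSumFinEquiv.symm finSumFinEquiv.symm).map _ *ᵥ y = _
  simp only [← submatrix_map, fromBlocks_map, Matrix.map_zero _ Int.cast_zero]
  exact dotProduct_fromBlocks_submatrix_mulVec _ _ x y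

theorem bform_add (x y : Fin (L + M).n → ℤ) :
    (L + M).bform x y =
      L.bform (x ∘ Fin.castAdd M.n) (y ∘ Fin.castAdd M.n) +
        M.bform (x ∘ Fin.natAdd L.n) (y ∘ Fin.natAdd L.n) :=
  dotProduct_fromBlocks_submatrix_mulVec L.B M.B x y

theorem bQ_add (x y : Fin (L + M).n → ℚ) :
    (L + M).bQ x y =
      L.bQ (x ∘ Fin.castAdd M.n) (y ∘ Fin.castAdd M.n) +
        M.bQ (x ∘ Fin.natAdd L.n) (y ∘ Fin.natAdd L.n) :=
  dotProduct_add_B_map_mulVec L M x y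

theorem bR_add (x y : Fin (L + M).n → ℝ) :
    (L + M).bR x y =
      L.bR (x ∘ Fin.castAdd M.n) (y ∘ Fin.castAdd M.n) +
        M.bR (x ∘ Fin.natAdd L.n) (y ∘ Fin.natAdd L.n) :=
  dotProduct_add_B_map_mulVec L M x y

theorem bQ_zero_right (x : Fin L.n → ℚ) : L.bQ x 0 = 0 := by
  simp only [bQ, mulVec_zero, dotProduct_zero]

theorem bform_neg_neg (x y : Fin L.n → ℤ) : L.bform (-x) (-y) = L.bform x y := by
  simp only [bform, mulVec_neg, neg_dotProduct, dotProduct_neg, neg_neg]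

theorem bR_neg_neg (x y : Fin L.n → ℝ) : L.bR (-x) (-y) = L.bR x y := by
  simp only [bR, mulVec_neg, neg_dotProduct, dotProduct_neg, neg_neg]

theorem bform_twist (c : ℤ) (x y : Fin L.n → ℤ) : (twist c L).bform x y = c * L.bform x y := by
  change x ⬝ᵥ (c • L.B) *ᵥ y = c * (x ⬝ᵥ L.B *ᵥ y)
  rw [smul_mulVec, dotProduct_smul, smul_eq_mul]

theorem bR_intCast (x y : Fin L.n → ℤ) :
    L.bR (fun i => (x i : ℝ)) (fun i => (y i : ℝ)) = L.bform x y := by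
  simp only [bR, bform, dotProduct, mulVec, Matrix.map_apply]
  push_cast; rfl

end Forms

theorem not_isRoot_of_four_dvd {L : IntLattice} (h : ∀ x, 4 ∣ L.bform x x) (v : Fin L.n → ℤ) :
    ¬ L.IsRoot v := by
  rintro (h2 | ⟨h6, -⟩)
  · have := h v; rw [h2] at this; omega
  · have := h v; rw [h6] at this; omega

theorem four_dvd_bform_self_twist_two {L : IntLattice} (hL : L.IsEvenLat) (x : Fin L.n → ℤ) :
    4 ∣ (twist 2 L).bform x x := by
  obtain ⟨r, hr⟩ := hL x
  exact ⟨r, by rw [bform_twist, hr]; ring⟩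

theorem four_dvd_bform_self_add {L M : IntLattice} (hL : ∀ x, 4 ∣ L.bform x x)
    (hM : ∀ x, 4 ∣ M.bform x x) (x : Fin (L + M).n → ℤ) : 4 ∣ (L + M).bform x x := by
  rw [bform_add]
  exact dvd_add (hL _) (hM _)

theorem isEvenLat_latU : latU.IsEvenLat := fun (x : Fin 2 → ℤ) =>
  ⟨x 0 * x 1, by
    unfold bform latU; dsimp only
    simp only [dotProduct, mulVec, of_apply, cons_val', Fin.sum_univ_succ, Fin.sum_univ_zero,
      cons_val_zero, cons_val_succ, Fin.succ_zero_eq_one]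
    ring⟩

theorem isEvenLat_latE6 : latE6.IsEvenLat := fun (x : Fin 6 → ℤ) =>
  ⟨x 0 ^ 2 + x 1 ^ 2 + x 2 ^ 2 + x 3 ^ 2 + x 4 ^ 2 + x 5 ^ 2
      - x 0 * x 1 - x 1 * x 2 - x 2 * x 3 - x 3 * x 4 - x 2 * x 5, by
    unfold bform latE6; dsimp only
    simp only [dotProduct, mulVec, of_apply, cons_val', Fin.sum_univ_succ, Fin.sum_univ_zero,
      cons_val_zero, cons_val_succ, Fin.succ_zero_eq_one, Fin.succ_one_eq_two, Fin.reduceSucc]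
    ring⟩

theorem two_smul_mem_latt_of_mem_dual_twist_two_latU :
    ∀ y ∈ (twist 2 latU).dual, (2 : ℤ) • y ∈ (twist 2 latU).latt := by
  rintro (y : Fin 2 → ℚ) hy
  have key : ∀ x : Fin 2 → ℤ,
      (twist 2 latU).bQ y (fun i => (x i : ℚ)) = 2 * (y 0 * x 1 + y 1 * x 0) := by
    intro x
    unfold bQ twist latU; dsimp only
    simp only [dotProduct, mulVec, smul_of, smul_cons, smul_empty, Int.zsmul_eq_mul, mul_zero,
      mul_one, map_apply, of_apply, cons_val', Fin.sum_univ_succ, Fin.sum_univ_zero, cons_val_zero,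
      cons_val_succ, Fin.succ_zero_eq_one, Int.cast_zero, Int.cast_ofNat]
    ring
  refine Submodule.mem_pi.2 fun (i : Fin 2) _ => ?_
  change (2 : ℤ) • y i ∈ intQ
  rw [zsmul_eq_mul, Int.cast_ofNat]
  fin_cases i
  · simpa [key] using hy ![0, 1]
  · simpa [key] using hy ![1, 0]

section Reflection

variable (L M : IntLattice)

def signRight : Fin (L + M).n → ℤ := Fin.addCases (fun _ => 1) (fun _ => -1)

@[simp] theorem signRight_castAdd (i : Fin L.n) : signRight L M (Fin.castAdd M.n i) = 1 :=
  Fin.addCases_left i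

@[simp] theorem signRight_natAdd (i : Fin M.n) : signRight L M (Fin.natAdd L.n i) = -1 :=
  Fin.addCases_right i

theorem signRight_mul_self (i : Fin (L + M).n) : signRight L M i * signRight L M i = 1 := by
  refine Fin.addCases (fun j => ?_) (fun j => ?_) i <;> simp

section

variable {R : Type*} [Ring R] (x : Fin (L + M).n → R)

theorem signRight_mul_comp_castAdd :
    (fun i => (signRight L M i : R) * x i) ∘ Fin.castAdd M.n = x ∘ Fin.castAdd M.n := by
  ext i
  change (signRight L M (Fin.castAdd M.n i) : R) * _ = x (Fin.castAdd M.n i)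
  simp

theorem signRight_mul_comp_natAdd :
    (fun i => (signRight L M i : R) * x i) ∘ Fin.natAdd L.n = -(x ∘ Fin.natAdd L.n) := by
  ext i
  change (signRight L M (Fin.natAdd L.n i) : R) * _ = -x (Fin.natAdd L.n i)
  simp

theorem diagonal_signRight_map_mulVec :
    (diagonal (signRight L M)).map (Int.cast : ℤ → R) *ᵥ x =
      fun i => (signRight L M i : R) * x i := by
  ext i
  rw [diagonal_map Int.cast_zero, mulVec_diagonal]

end

def reflectRight : (Fin (L + M).n → ℤ) ≃ₗ[ℤ] (Fin (L + M).n → ℤ) :=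
  LinearEquiv.ofInvolutive (toLin' (diagonal (signRight L M))) fun x => by
    rw [← toLin'_mul_apply, diagonal_mul_diagonal]
    simp [signRight_mul_self]

theorem matOf_reflectRight :
    (L + M).matOf (reflectRight L M).toLinearMap = diagonal (signRight L M) :=
  LinearMap.toMatrix'_toLin' _

theorem reflectRight_apply (x : Fin (L + M).n → ℤ) :
    reflectRight L M x = fun i => signRight L M i * x i :=
  funext (mulVec_diagonal _ _)

theorem mapR_reflectRight (x : Fin (L + M).n → ℝ) :
    (L + M).mapR (reflectRight L M).toLinearMap x = fun i => (signRight L M i : ℝ) * x i := by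
  rw [mapR, matOf_reflectRight]
  exact diagonal_signRight_map_mulVec L M x

theorem mapQ_reflectRight (x : Fin (L + M).n → ℚ) :
    (L + M).mapQ (reflectRight L M).toLinearMap x = fun i => (signRight L M i : ℚ) * x i := by
  rw [mapQ, matOf_reflectRight]
  exact diagonal_signRight_map_mulVec L M x

theorem isIsometry_reflectRight : (L + M).IsIsometry (reflectRight L M) := by
  intro x y
  have hL := signRight_mul_comp_castAdd L M (R := ℤ)
  have hM := signRight_mul_comp_natAdd L M (R := ℤ)
  simp only [Int.cast_id] at hL hM
  rw [reflectRight_apply, reflectRight_apply, bform_add, bform_add, hL, hL, hM, hM,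
    bform_neg_neg]

theorem bR_mapR_reflectRight (x y : Fin (L + M).n → ℝ) :
    (L + M).bR ((L + M).mapR (reflectRight L M).toLinearMap x)
      ((L + M).mapR (reflectRight L M).toLinearMap y) = (L + M).bR x y := by
  rw [mapR_reflectRight, mapR_reflectRight, bR_add, bR_add, signRight_mul_comp_castAdd,
    signRight_mul_comp_castAdd, signRight_mul_comp_natAdd, signRight_mul_comp_natAdd, bR_neg_neg]

end Reflection

variable {L M : IntLattice}

theorem comp_castAdd_mem_dual {y : Fin (L + M).n → ℚ} (hy : y ∈ (L + M).dual) :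
    y ∘ Fin.castAdd M.n ∈ L.dual := by
  intro x
  have h := hy (Fin.append x (0 : Fin M.n → ℤ))
  have hleft : (fun i : Fin (L + M).n => ((Fin.append x (0 : Fin M.n → ℤ) i : ℤ) : ℚ)) ∘
      Fin.castAdd M.n = fun i => (x i : ℚ) := by
    ext i
    change ((Fin.append x (0 : Fin M.n → ℤ) (Fin.castAdd M.n i) : ℤ) : ℚ) = x i
    simp
  have hright : (fun i : Fin (L + M).n => ((Fin.append x (0 : Fin M.n → ℤ) i : ℤ) : ℚ)) ∘
      Fin.natAdd L.n = 0 := by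
    ext i
    change ((Fin.append x (0 : Fin M.n → ℤ) (Fin.natAdd L.n i) : ℤ) : ℚ) = 0
    simp
  rwa [bQ_add, hleft, hright, bQ_zero_right, add_zero] at h

theorem inducesNeg3_reflectRight (hL : ∀ y ∈ L.dual, (2 : ℤ) • y ∈ L.latt) :
    (L + M).InducesNeg3 (reflectRight L M).toLinearMap := by
  intro y hy _
  have h2 := Submodule.mem_pi.1 (hL _ (comp_castAdd_mem_dual hy))
  rw [mapQ_reflectRight]
  refine Submodule.mem_pi.2 fun i _ => Fin.addCases (fun j => ?_) (fun j => ?_) i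
  · convert h2 j trivial using 1
    change (signRight L M (Fin.castAdd M.n j) : ℚ) * _ + _ = (2 : ℤ) • y (Fin.castAdd M.n j)
    simp only [signRight_castAdd, Int.cast_one, one_mul, zsmul_eq_mul, Int.cast_ofNat]
    ring
  · convert zero_mem intQ using 1
    change (signRight L M (Fin.natAdd L.n j) : ℚ) * _ + _ = 0
    simp

theorem achiral_add_of_forall_not_isRoot (hroot : ∀ v, ¬ (L + M).IsRoot v)
    (hL : ∀ y ∈ L.dual, (2 : ℤ) • y ∈ L.latt) {u : Fin L.n → ℤ} (hu : L.bform u u < 0) :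
    (L + M).Achiral := by
  set f := (L + M).mapR (reflectRight L M).toLinearMap
  set v : Fin (L + M).n → ℤ := Fin.append u 0
  have hcone : (L + M).negCone = {x | (L + M).bR x x < 0} := by
    ext x; simp [negCone, hroot]
  have hv : (fun i => (v i : ℝ)) ∈ (L + M).negCone := by
    have hvL : v ∘ Fin.castAdd M.n = u := funext (Fin.append_left u 0)
    have hvM : v ∘ Fin.natAdd L.n = 0 := funext (Fin.append_right u 0)
    rw [hcone, Set.mem_setOf_eq, bR_intCast, bform_add, hvL, hvM, bform_zero_left, add_zero]
    exact_mod_cast hu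
  have hfix : f (fun i => (v i : ℝ)) = fun i => (v i : ℝ) := by
    simp only [f, mapR_reflectRight]
    ext i
    refine Fin.addCases (fun j => ?_) (fun j => ?_) i <;> simp [v]
  refine ⟨reflectRight L M, isIsometry_reflectRight L M, ⟨_, hv, ?_⟩,
    inducesNeg3_reflectRight hL⟩
  refine Function.Involutive.image_connectedComponentIn_eq ?_ ?_ ?_ hv hfix
  · intro x
    simp only [mapR_reflectRight]
    ext i
    rw [← mul_assoc, ← Int.cast_mul, signRight_mul_self, Int.cast_one, one_mul]
  · exact continuous_const.matrix_mulVec continuous_id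
  · rw [hcone]
    intro x hx
    rw [Set.mem_setOf_eq, bR_mapR_reflectRight]
    exact hx

end IntLattice

open IntLattice in
/-- `U(2)+E₆(2)` has no 2-roots and no 6-roots, and is achiral. -/
theorem statement_5 :
    (∀ v : Fin (twist 2 latU + twist 2 latE6).n → ℤ,
        ¬ (twist 2 latU + twist 2 latE6).IsRoot v) ∧
    Achiral (twist 2 latU + twist 2 latE6) := by
  have hroot : ∀ v, ¬ (twist 2 latU + twist 2 latE6).IsRoot v :=
    not_isRoot_of_four_dvd <| four_dvd_bform_self_add
      (four_dvd_bform_self_twist_two isEvenLat_latU)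
      (four_dvd_bform_self_twist_two isEvenLat_latE6)
  refine ⟨hroot, achiral_add_of_forall_not_isRoot hroot
    two_smul_mem_latt_of_mem_dual_twist_two_latU (u := ![1, -1]) ?_⟩
  decide
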